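/- arXiv:2011.11225 — 2 statements merged into one kernel-verified Lean document; each statement's English description precedes it below -/
import Mathlib

section
/- Let N = p_1 ··· p_r be square-free. There exists a Kakeya set S ⊆ (Z/NZ)^n with |S| ≤ ∏_{i=1}^r (p_i^n / 2^{n−1} + C · p_i^{n−1}) for an absolute constant C > 1. -/
/-- A direction in `(Z/NZ)^n`: a vector whose reduction modulo every prime factor of `N`
is non-zero. -/
def IsDirection {N : ℕ} {n : ℕ} (b : Fin n → ZMod N) : Prop :=
  ∀ (q : ℕ), q.Prime → ∀ (h : q ∣ N), (fun i => ZMod.castHom h (ZMod q) (b i)) ≠ 0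

/-- A Kakeya set in `(Z/NZ)^n`: contains a line in every direction. -/
def IsKakeyaSet {N : ℕ} {n : ℕ} (S : Finset (Fin n → ZMod N)) : Prop :=
  ∀ b : Fin n → ZMod N, IsDirection b →
    ∃ a : Fin n → ZMod N, ∀ t : ZMod N, a + t • b ∈ S

/-!
Over a finite field of odd order `q`, normalise a direction so that its first nonzero coordinate
`i` equals `1`. The line through the point with zero coordinates up to `i` and coordinates
`c j ^ 2` beyond `i` meets the hyperplane `x i = t` in the point with coordinates
`c j ^ 2 + t * c j`. Hence the union, over `i` and `t`, of the boxes with zeros before `i`, `t`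
at `i`, and values of `c ↦ c ^ 2 + t * c` after `i` is a Kakeya set. Completing the square,
`c ^ 2 + t * c` takes at most `(q + 1) / 2` values, so the set has at most
`q * ∑ k < n, ((q + 1) / 2) ^ k ≤ q ^ n / 2 ^ (n - 1) + 10 * q ^ (n - 1)` points; for `q = 2`
the whole space is small enough. Modulo a square-free `N`, the Chinese remainder theorem turns
Kakeya sets modulo the prime factors into one modulo `N`: a direction reduces to a direction
modulo each factor, and the lines found there glue to a line modulo `N`, so the sizes multiply.
-/

open Finset

section FiniteField

variable {F : Type*} [Field F] [Fintype F] [DecidableEq F]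

theorem two_mul_card_image_sq_le (hF : ringChar F ≠ 2) :
    2 * #(univ.image fun c : F => c ^ 2) ≤ Fintype.card F + 1 := by
  set nonzero : Finset F := univ.erase 0
  have hfiber : ∀ y ∈ nonzero.image (· ^ 2), 2 ≤ #{c ∈ nonzero | c ^ 2 = y} := by
    simp only [mem_image]
    rintro _ ⟨c, hc, rfl⟩
    have hc0 : c ≠ 0 := ne_of_mem_erase hc
    have hne : c ≠ -c := fun h => hc0 <|
      (mul_eq_zero.mp (by linear_combination h : (2 : F) * c = 0)).resolve_left
        (Ring.two_ne_zero hF)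
    calc 2 = #{c, -c} := (card_pair hne).symm
      _ ≤ _ := card_le_card <| by
        simp [insert_subset_iff, nonzero, hc0]
  have hsub : univ.image (fun c : F => c ^ 2) ⊆ insert 0 (nonzero.image (· ^ 2)) := by
    intro y
    simp only [mem_image, mem_univ, true_and, mem_insert]
    rintro ⟨c, rfl⟩
    by_cases hc : c = 0
    · simp [hc]
    · exact Or.inr ⟨c, by simp [nonzero, hc]⟩
  have hnonzero : #nonzero + 1 = Fintype.card F := card_erase_add_one (mem_univ _)
  have := mul_card_image_le_card nonzero 2 hfiber
  have := (card_le_card hsub).trans (card_insert_le _ _)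
  omega

theorem card_image_sq_add_mul_le (h2 : (2 : F) ≠ 0) (t : F) :
    #(univ.image fun c : F => c ^ 2 + t * c) ≤ #(univ.image fun c : F => c ^ 2) := by
  -- completing the square: `c ^ 2 + t c = (c + t / 2) ^ 2 - (t / 2) ^ 2`
  calc #(univ.image fun c : F => c ^ 2 + t * c)
      ≤ #((univ.image fun c : F => c ^ 2).image (· - (t / 2) ^ 2)) := by
        refine card_le_card fun y => ?_
        simp only [mem_image, mem_univ, true_and, exists_exists_eq_and]
        rintro ⟨c, rfl⟩
        exact ⟨c + t / 2, by field_simp; ring⟩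
    _ ≤ _ := card_image_le

variable (F) in
def kakeyaSlab {n : ℕ} (i : Fin n) (t : F) (j : Fin n) : Finset F :=
  if j < i then {0} else if j = i then {t} else univ.image fun c => c ^ 2 + t * c

variable (F) in
def quadraticKakeyaSet (n : ℕ) : Finset (Fin n → F) :=
  univ.biUnion fun it : Fin n × F => Fintype.piFinset (kakeyaSlab F it.1 it.2)

theorem exists_add_smul_mem_quadraticKakeyaSet {n : ℕ} {b : Fin n → F} (hb : b ≠ 0) :
    ∃ a : Fin n → F, ∀ s : F, a + s • b ∈ quadraticKakeyaSet F n := by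
  obtain ⟨i, hi : b i ≠ 0, hmin⟩ :=
    wellFounded_lt.has_min {j | b j ≠ 0} (Function.ne_iff.mp hb)
  have hlt : ∀ j < i, b j = 0 := fun j hj => not_not.mp fun h => hmin j h hj
  refine ⟨fun j => if i < j then (b j / b i) ^ 2 else 0, fun s => ?_⟩
  refine mem_biUnion.mpr ⟨(i, s * b i), mem_univ _, Fintype.mem_piFinset.mpr fun j => ?_⟩
  rcases lt_trichotomy j i with hj | rfl | hj
  · simp [kakeyaSlab, hj, hj.not_gt, hlt j hj]
  · simp [kakeyaSlab]
  · simp only [kakeyaSlab, hj, hj.not_gt, hj.ne', if_true, if_false, Pi.add_apply, Pi.smul_apply,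
      smul_eq_mul, mem_image, mem_univ, true_and]
    exact ⟨b j / b i, by field_simp⟩

theorem two_mul_card_image_sq_add_mul_le (hF : ringChar F ≠ 2) (t : F) :
    2 * #(univ.image fun c : F => c ^ 2 + t * c) ≤ Fintype.card F + 1 :=
  (Nat.mul_le_mul_left 2 (card_image_sq_add_mul_le (Ring.two_ne_zero hF) t)).trans
    (two_mul_card_image_sq_le hF)

theorem card_piFinset_kakeyaSlab_le (hF : ringChar F ≠ 2) {n : ℕ} (i : Fin n) (t : F) :
    (#(Fintype.piFinset (kakeyaSlab F i t)) : ℝ) ≤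
      ((Fintype.card F + 1 : ℝ) / 2) ^ (n - 1 - i) := by
  have hquad : (#(univ.image fun c : F => c ^ 2 + t * c) : ℝ) ≤ (Fintype.card F + 1) / 2 := by
    have h : (2 * #(univ.image fun c : F => c ^ 2 + t * c) : ℝ) ≤ Fintype.card F + 1 := by
      exact_mod_cast two_mul_card_image_sq_add_mul_le hF t
    linarith
  rw [Fintype.card_piFinset, Nat.cast_prod]
  calc _ ≤ ∏ j, if i < j then (Fintype.card F + 1 : ℝ) / 2 else 1 := by
        refine prod_le_prod (fun j _ => by positivity) fun j _ => ?_
        rcases lt_trichotomy j i with hj | rfl | hj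
        · simp [kakeyaSlab, hj, hj.not_gt]
        · simp [kakeyaSlab]
        · simpa [kakeyaSlab, hj, hj.not_gt, hj.ne'] using hquad
    _ = _ := by
        rw [prod_ite, prod_const_one, mul_one, prod_const, filter_lt_eq_Ioi, Fin.card_Ioi]

theorem card_quadraticKakeyaSet_le (hF : ringChar F ≠ 2) (n : ℕ) :
    (#(quadraticKakeyaSet F n) : ℝ) ≤
      Fintype.card F * ∑ k ∈ range n, ((Fintype.card F + 1 : ℝ) / 2) ^ k := by
  set r : ℝ := (Fintype.card F + 1 : ℝ) / 2
  calc (#(quadraticKakeyaSet F n) : ℝ)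
      ≤ ∑ it : Fin n × F, r ^ (n - 1 - (it.1 : ℕ)) := by
        refine (Nat.cast_le.mpr card_biUnion_le).trans ?_
        push_cast
        exact sum_le_sum fun it _ => card_piFinset_kakeyaSlab_le hF it.1 it.2
    _ = Fintype.card F * ∑ k ∈ range n, r ^ k := by
        simp only [Fintype.sum_prod_type, sum_const, card_univ, nsmul_eq_mul, ← mul_sum]
        rw [Fin.sum_univ_eq_sum_range (fun i => r ^ (n - 1 - i)), sum_range_reflect (r ^ ·) n]

end FiniteField

theorem mul_geom_sum_half_succ_le {q : ℝ} (hq : 3 ≤ q) (n : ℕ) :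
    q * ∑ k ∈ range n, ((q + 1) / 2) ^ k ≤ q ^ n / 2 ^ (n - 1) + 10 * q ^ (n - 1) := by
  obtain _ | m := n
  · norm_num
  simp only [Nat.add_sub_cancel]
  induction m with
  | zero => norm_num
  | succ m ih =>
    have hx : 1 ≤ q ^ m := one_le_pow₀ (by linarith)
    have hy : 1 ≤ (2 : ℝ) ^ m := one_le_pow₀ (by norm_num)
    set z := q ^ m * q / 2 ^ m
    have hz : z ≤ q ^ m * q := div_le_self (by positivity) hy
    have hz0 : 0 ≤ z := by positivity
    calc q * ∑ k ∈ range (m + 2), ((q + 1) / 2) ^ k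
        = (q + 1) / 2 * (q * ∑ k ∈ range (m + 1), ((q + 1) / 2) ^ k) + q := by
          rw [geom_sum_succ]; ring
      _ ≤ (q + 1) / 2 * (z + 10 * q ^ m) + q := by
          gcongr
          simpa [pow_succ] using ih
      _ ≤ q * z / 2 + 10 * q ^ (m + 1) := by
          rw [pow_succ]
          nlinarith
      _ = q ^ (m + 2) / 2 ^ (m + 1) + 10 * q ^ (m + 1) := by
          simp only [z, pow_succ]; ring

theorem isKakeyaSet_univ {N n : ℕ} [NeZero N] : IsKakeyaSet (univ : Finset (Fin n → ZMod N)) :=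
  fun _ _ => ⟨0, fun _ => mem_univ _⟩

theorem IsDirection.ne_zero {N n : ℕ} {b : Fin n → ZMod N} (hb : IsDirection b) (hN : N ≠ 1) :
    b ≠ 0 := by
  rintro rfl
  exact hb N.minFac (Nat.minFac_prime hN) N.minFac_dvd (by ext; simp)

theorem IsDirection.map {N d n : ℕ} {b : Fin n → ZMod N} (hb : IsDirection b) (hd : d ∣ N)
    (f : ZMod N →+* ZMod d) : IsDirection fun i => f (b i) := by
  intro q hq hqd
  have hcomp : (ZMod.castHom hqd (ZMod q)).comp f = ZMod.castHom (hqd.trans hd) (ZMod q) :=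
    RingHom.ext_zmod _ _
  simpa [← hcomp] using hb q hq (hqd.trans hd)

theorem exists_isKakeyaSet_mul_card_le {a b n : ℕ} (hab : a.Coprime b)
    {Sa : Finset (Fin n → ZMod a)} {Sb : Finset (Fin n → ZMod b)}
    (ha : IsKakeyaSet Sa) (hb : IsKakeyaSet Sb) :
    ∃ S : Finset (Fin n → ZMod (a * b)), IsKakeyaSet S ∧ #S ≤ #Sa * #Sb := by
  set e := ZMod.chineseRemainder hab
  let glue : (Fin n → ZMod a) × (Fin n → ZMod b) → Fin n → ZMod (a * b) :=
    fun uv i => e.symm (uv.1 i, uv.2 i)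
  refine ⟨(Sa ×ˢ Sb).image glue, fun β hβ => ?_, card_image_le.trans (card_product _ _).le⟩
  obtain ⟨α₁, hα₁⟩ := ha _ <| hβ.map (dvd_mul_right a b) ((RingHom.fst _ _).comp e.toRingHom)
  obtain ⟨α₂, hα₂⟩ := hb _ <| hβ.map (dvd_mul_left b a) ((RingHom.snd _ _).comp e.toRingHom)
  refine ⟨glue (α₁, α₂), fun t => mem_image.mpr
    ⟨(_, _), mem_product.mpr ⟨hα₁ (e t).1, hα₂ (e t).2⟩, ?_⟩⟩
  ext i
  apply e.injective
  simp [glue, Prod.ext_iff]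

theorem exists_isKakeyaSet_prod_primes_card_le {n : ℕ} (f : ℕ → ℝ)
    (hf : ∀ p, p.Prime → ∃ K : Finset (Fin n → ZMod p), IsKakeyaSet K ∧ (#K : ℝ) ≤ f p)
    (s : Finset ℕ) (hs : ∀ p ∈ s, p.Prime) :
    ∃ S : Finset (Fin n → ZMod (∏ p ∈ s, p)), IsKakeyaSet S ∧ (#S : ℝ) ≤ ∏ p ∈ s, f p := by
  induction s using Finset.induction_on with
  | empty =>
    rw [prod_empty, prod_empty]
    exact ⟨univ, isKakeyaSet_univ, by simp⟩
  | insert p s hps ih =>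
    have hp := hs p (mem_insert_self p s)
    obtain ⟨Ss, hSs, hSs_card⟩ := ih fun q hq => hs q (mem_insert_of_mem hq)
    obtain ⟨Sp, hSp, hSp_card⟩ := hf p hp
    have hcop : p.Coprime (∏ q ∈ s, q) := Nat.Coprime.prod_right fun q hq =>
      (Nat.coprime_primes hp (hs q (mem_insert_of_mem hq))).mpr
        (ne_of_mem_of_not_mem hq hps).symm
    obtain ⟨S, hS, hS_card⟩ := exists_isKakeyaSet_mul_card_le hcop hSp hSs
    rw [prod_insert hps, prod_insert hps]
    refine ⟨S, hS, ?_⟩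
    calc (#S : ℝ) ≤ #Sp * #Ss := by exact_mod_cast hS_card
      _ ≤ f p * ∏ q ∈ s, f q :=
        mul_le_mul hSp_card hSs_card (Nat.cast_nonneg _) ((Nat.cast_nonneg _).trans hSp_card)

theorem exists_isKakeyaSet_zmod_prime_card_le {p : ℕ} (hp : p.Prime) (n : ℕ) :
    ∃ K : Finset (Fin n → ZMod p), IsKakeyaSet K ∧
      (#K : ℝ) ≤ (p : ℝ) ^ n / 2 ^ (n - 1) + 10 * (p : ℝ) ^ (n - 1) := by
  have := Fact.mk hp
  rcases eq_or_ne p 2 with rfl | hp2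
  · refine ⟨univ, isKakeyaSet_univ, ?_⟩
    have h2n : (2 : ℝ) ^ n ≤ 2 * 2 ^ (n - 1) := by
      rw [← pow_succ']; exact pow_le_pow_right₀ one_le_two (by omega)
    simp only [card_univ, Fintype.card_fun, ZMod.card, Fintype.card_fin, Nat.cast_pow,
      Nat.cast_ofNat]
    have : (0 : ℝ) ≤ 2 ^ n / 2 ^ (n - 1) := by positivity
    nlinarith [one_le_pow₀ (one_le_two : (1 : ℝ) ≤ 2) (n := n - 1)]
  · have hF : ringChar (ZMod p) ≠ 2 := by rwa [ZMod.ringChar_zmod_n]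
    have h3 : (3 : ℝ) ≤ p := by
      have := hp.two_le
      exact_mod_cast (show 3 ≤ p by omega)
    refine ⟨quadraticKakeyaSet (ZMod p) n,
      fun b hb => exists_add_smul_mem_quadraticKakeyaSet (hb.ne_zero hp.one_lt.ne'), ?_⟩
    have hK := card_quadraticKakeyaSet_le hF n
    rw [ZMod.card] at hK
    exact hK.trans (mul_geom_sum_half_succ_le h3 n)

/-- There is an absolute constant `C > 1` such that for every square-free
`N = p_1 ⋯ p_r` and every `n ≥ 1` there is a Kakeya set `S ⊆ (Z/NZ)^n` with
`|S| ≤ ∏ (p_i^n / 2^{n-1} + C p_i^{n-1})`. -/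
theorem kakeya_squarefree_upper_bound :
    ∃ C : ℝ, 1 < C ∧ ∀ (N n : ℕ), Squarefree N → 1 ≤ n →
      ∃ S : Finset (Fin n → ZMod N), IsKakeyaSet S ∧
        (S.card : ℝ) ≤
          ∏ q ∈ N.primeFactors, ((q : ℝ) ^ n / 2 ^ (n - 1) + C * (q : ℝ) ^ (n - 1)) := by
  refine ⟨10, by norm_num, fun N n hN _ => ?_⟩
  have h := exists_isKakeyaSet_prod_primes_card_le _
    (fun p hp => exists_isKakeyaSet_zmod_prime_card_le hp n) N.primeFactors
    fun p => Nat.prime_of_mem_primeFactors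
  rwa [Nat.prod_primeFactors_of_squarefree hN] at h
end

section
/- Let p be prime and k, n ≥ 1. Every Kakeya set S ⊆ (Z/p^k Z)^n satisfies |S| ≥ rank_{F_p}(W_{p^k,n}), where W_{p^k,n} is the p^{kn} × p^{kn} 0-1 matrix with rows and columns indexed by (Z/p^k Z)^n whose (x,y) entry is 1 iff ⟨x,y⟩ = 0 mod p^k. -/
/-!
Every vector `x` is a multiple of a direction, so a Kakeya set `S` contains a line
`{a x + t • x}` for every `x`. Over `ℤ[ζ] = ℤ[X]/(Φ_{p^k})` put
`G x y = ζ ^ ⟪a x, y⟫ * [⟪x, y⟫ = 0]`. Sending `ζ ↦ 1` reduces `G` to `W` modulo `p`, and a nonzero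
minor of `W` lifts to a nonzero minor of `G`, so `rank_{𝔽_p} W ≤ rank G` over the fraction field.
Summing the character `y ↦ ζ ^ ⟪s, y⟫` over the points `s` of the line through `a x` in direction
`x` gives `p ^ k * G x y`, since the sum of `ζ ^ (t * ⟪x, y⟫)` over `t` vanishes unless
`⟪x, y⟫ = 0`. So every row of `G` lies in the span of the `|S|` character rows indexed by `S`.
-/

open scoped BigOperators

open Polynomial Matrix

namespace Matrix

variable {m n F : Type*} [Fintype m] [Fintype n] [Field F]

theorem exists_linearIndependent_col_comp (M : Matrix m n F) {ι : Type*} [Fintype ι]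
    (hι : Fintype.card ι = M.rank) : ∃ c : ι → n, LinearIndependent F (M.col ∘ c) := by
  obtain ⟨κ, c, -, hspan, hli⟩ := exists_linearIndependent' F M.col
  have : Finite κ := hli.finite
  have := Fintype.ofFinite κ
  have hκ : Fintype.card κ = M.rank := by
    rw [M.rank_eq_finrank_span_cols, ← hspan, finrank_span_eq_card hli]
  let e : ι ≃ κ := Fintype.equivOfCardEq (hι.trans hκ.symm)
  exact ⟨c ∘ e, hli.comp e e.injective⟩

theorem exists_submatrix_det_ne_zero (M : Matrix m n F) :
    ∃ (r : Fin M.rank → m) (c : Fin M.rank → n), (M.submatrix r c).det ≠ 0 := by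
  obtain ⟨c, hc⟩ := M.exists_linearIndependent_col_comp (ι := Fin M.rank) (Fintype.card_fin _)
  have hrank : (M.submatrix id c)ᵀ.rank = M.rank :=
    (LinearIndependent.rank_matrix (M := (M.submatrix id c)ᵀ) hc).trans (Fintype.card_fin _)
  obtain ⟨r, hr⟩ := (M.submatrix id c)ᵀ.exists_linearIndependent_col_comp (ι := Fin M.rank)
    (by rw [hrank, Fintype.card_fin])
  exact ⟨r, c, ((isUnit_iff_isUnit_det _).1 (linearIndependent_rows_iff_isUnit.1 hr)).ne_zero⟩

theorem rank_map_le_rank_map_of_injective {A K : Type*} [CommRing A] [Field K] (π : A →+* F)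
    (φ : A →+* K) (hφ : Function.Injective φ) (M : Matrix m n A) :
    (M.map π).rank ≤ (M.map φ).rank := by
  obtain ⟨r, c, hπ⟩ := (M.map π).exists_submatrix_det_ne_zero
  have hφ : ((M.map φ).submatrix r c).det ≠ 0 := by
    rw [submatrix_map, ← RingHom.mapMatrix_apply, ← RingHom.map_det] at hπ ⊢
    exact (map_ne_zero_iff φ hφ).2 (ne_zero_of_map hπ)
  calc (M.map π).rank = ((M.map φ).submatrix r c).rank := by
        rw [rank_of_det_ne_zero hφ, Fintype.card_fin]
    _ ≤ (M.map φ).rank := rank_submatrix_le _ _ _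

end Matrix

section Lines

variable {N n : ℕ} [NeZero N]

theorem exists_isDirection_smul_eq (hn : 0 < n) (x : Fin n → ZMod N) :
    ∃ (c : ZMod N) (b : Fin n → ZMod N), IsDirection b ∧ x = c • b := by
  obtain ⟨y, hxy, hy⟩ :=
    Finset.extract_gcd (fun i => (x i).val) (Finset.univ_nonempty_iff.2 ⟨⟨0, hn⟩⟩)
  refine ⟨(Finset.univ.gcd fun i => (x i).val : ℕ), fun i => y i, ?_, ?_⟩
  · intro q hq hqN hb
    have hdvd : ∀ i, q ∣ y i := fun i =>
      (ZMod.natCast_eq_zero_iff _ _).1 (by simpa using congrFun hb i)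
    exact hq.not_dvd_one (hy ▸ Finset.dvd_gcd fun i _ => hdvd i)
  · funext i
    rw [Pi.smul_apply, smul_eq_mul, ← Nat.cast_mul, ← hxy i (Finset.mem_univ i),
      ZMod.natCast_zmod_val]

theorem IsKakeyaSet.exists_line {S : Finset (Fin n → ZMod N)} (hS : IsKakeyaSet S) (hn : 0 < n)
    (x : Fin n → ZMod N) : ∃ a, ∀ t : ZMod N, a + t • x ∈ S := by
  obtain ⟨c, b, hb, rfl⟩ := exists_isDirection_smul_eq hn x
  obtain ⟨a, ha⟩ := hS b hb
  exact ⟨a, fun t => by simpa [smul_smul] using ha (t * c)⟩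

end Lines

section TwistedIncidence

variable {N : ℕ} {ι : Type*} [Fintype ι]

theorem AddChar.sum_dotProduct_line [NeZero N] {R : Type*} [CommRing R] [IsDomain R]
    {ψ : AddChar (ZMod N) R} (hψ : ψ.IsPrimitive) (a x y : ι → ZMod N) :
    ∑ t : ZMod N, ψ ((a + t • x) ⬝ᵥ y) = if x ⬝ᵥ y = 0 then N * ψ (a ⬝ᵥ y) else 0 := by
  classical
  simp_rw [add_dotProduct, smul_dotProduct, smul_eq_mul, AddChar.map_add_eq_mul, ← Finset.mul_sum,
    AddChar.sum_mulShift _ hψ, ZMod.card]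
  split_ifs <;> ring

def twistedIncidence {R : Type*} [Semiring R] (ψ : AddChar (ZMod N) R)
    (a : (ι → ZMod N) → ι → ZMod N) : Matrix (ι → ZMod N) (ι → ZMod N) R :=
  of fun x y => ψ (a x ⬝ᵥ y) * if x ⬝ᵥ y = 0 then 1 else 0

theorem twistedIncidence_map {R R' : Type*} [Semiring R] [Semiring R'] (ψ : AddChar (ZMod N) R)
    (a : (ι → ZMod N) → ι → ZMod N) (f : R →+* R') :
    (twistedIncidence ψ a).map f = twistedIncidence ((f : R →* R').compAddChar ψ) a := by
  ext x y
  simp [twistedIncidence, apply_ite f]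

theorem twistedIncidence_one {R : Type*} [Semiring R] (a : (ι → ZMod N) → ι → ZMod N) :
    twistedIncidence (1 : AddChar (ZMod N) R) a = of fun x y => if x ⬝ᵥ y = 0 then 1 else 0 := by
  ext x y
  simp [twistedIncidence]

theorem rank_twistedIncidence_le_card [NeZero N] [DecidableEq ι] {K : Type*} [Field K]
    (hN : (N : K) ≠ 0) {ψ : AddChar (ZMod N) K} (hψ : ψ.IsPrimitive) {S : Finset (ι → ZMod N)}
    {a : (ι → ZMod N) → ι → ZMod N} (ha : ∀ x (t : ZMod N), a x + t • x ∈ S) :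
    (twistedIncidence ψ a).rank ≤ S.card := by
  classical
  let D : Matrix (ι → ZMod N) (ι → ZMod N) K := of fun s y => ψ (s ⬝ᵥ y)
  have hrow : ∀ x,
      (twistedIncidence ψ a).row x = (N : K)⁻¹ • ∑ t : ZMod N, D.row (a x + t • x) := by
    intro x
    ext y
    simp only [row, twistedIncidence, D, of_apply, Pi.smul_apply, Finset.sum_apply, smul_eq_mul]
    rw [AddChar.sum_dotProduct_line hψ]
    split_ifs <;> simp [hN]
  calc (twistedIncidence ψ a).rank
      = Module.finrank K (Submodule.span K (Set.range (twistedIncidence ψ a).row)) :=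
        rank_eq_finrank_span_row _
    _ ≤ Module.finrank K (Submodule.span K (S.image D.row : Set ((ι → ZMod N) → K))) := by
        refine Submodule.finrank_mono (Submodule.span_le.2 (Set.range_subset_iff.2 fun x => ?_))
        rw [hrow]
        exact Submodule.smul_mem _ _ (Submodule.sum_mem _ fun t _ =>
          Submodule.subset_span (Finset.mem_coe.2 (Finset.mem_image_of_mem _ (ha x t))))
    _ ≤ (S.image D.row).card := finrank_span_finset_le_card _
    _ ≤ S.card := Finset.card_image_le

end TwistedIncidence

section CyclotomicIntegers

variable (N : ℕ) [NeZero N]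

instance : IsDomain (AdjoinRoot (cyclotomic N ℤ)) :=
  AdjoinRoot.isDomain_of_prime (cyclotomic.irreducible (NeZero.pos N)).prime

theorem AdjoinRoot.isPrimitiveRoot_root_cyclotomic :
    IsPrimitiveRoot (AdjoinRoot.root (cyclotomic N ℤ)) N := by
  have hof : Function.Injective (AdjoinRoot.of (cyclotomic N ℤ)) :=
    AdjoinRoot.of.injective_of_degree_ne_zero (by
      rw [degree_cyclotomic]
      exact_mod_cast (Nat.totient_pos.2 (NeZero.pos N)).ne')
  have : NeZero (N : AdjoinRoot (cyclotomic N ℤ)) :=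
    ⟨by simpa using hof.ne (Nat.cast_ne_zero.2 (NeZero.ne N) : (N : ℤ) ≠ 0)⟩
  rw [← isRoot_cyclotomic_iff, ← map_cyclotomic N (AdjoinRoot.of _)]
  exact AdjoinRoot.isRoot_root _

end CyclotomicIntegers

theorem eval₂_one_cyclotomic_prime_pow_zmod (p k : ℕ) [Fact p.Prime] :
    (cyclotomic (p ^ k) ℤ).eval₂ (Int.castRingHom (ZMod p)) 1 = 0 := by
  cases k with
  | zero => simp
  | succ k => rw [eval₂_one_cyclotomic_prime_pow]; exact ZMod.natCast_self p

noncomputable def cyclotomicReduction (p k : ℕ) [Fact p.Prime] :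
    AdjoinRoot (cyclotomic (p ^ k) ℤ) →+* ZMod p :=
  AdjoinRoot.lift _ 1 (eval₂_one_cyclotomic_prime_pow_zmod p k)

theorem cyclotomicReduction_root (p k : ℕ) [Fact p.Prime] :
    cyclotomicReduction p k (AdjoinRoot.root (cyclotomic (p ^ k) ℤ)) = 1 :=
  AdjoinRoot.lift_root _

theorem kakeya_card_ge_rank_incidence_general
    {p : ℕ} [Fact p.Prime] {k n : ℕ} (hn : 1 ≤ n)
    (S : Finset (Fin n → ZMod (p ^ k))) (hS : IsKakeyaSet S) :
    (Matrix.of fun x y : Fin n → ZMod (p ^ k) =>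
        if ∑ i, x i * y i = 0 then (1 : ZMod p) else 0).rank ≤ S.card := by
  have : NeZero (p ^ k) := ⟨pow_ne_zero k (Fact.out : p.Prime).ne_zero⟩
  choose a ha using hS.exists_line hn
  let A := AdjoinRoot (cyclotomic (p ^ k) ℤ)
  let φ := algebraMap A (FractionRing A)
  have hφ : Function.Injective φ := IsFractionRing.injective A _
  have hζ := AdjoinRoot.isPrimitiveRoot_root_cyclotomic (p ^ k)
  let ψ := AddChar.zmodChar (p ^ k) hζ.pow_eq_one
  have hπψ : (cyclotomicReduction p k : A →* ZMod p).compAddChar ψ = 1 := by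
    ext t
    change cyclotomicReduction p k (AdjoinRoot.root _ ^ t.val) = 1
    rw [map_pow, cyclotomicReduction_root, one_pow]
  have hφψ : ((φ : A →* FractionRing A).compAddChar ψ).IsPrimitive :=
    (AddChar.zmodChar_primitive_of_primitive_root _ hζ).compMulHom_of_isPrimitive hφ
  have hN : ((p ^ k : ℕ) : FractionRing A) ≠ 0 := (hζ.map_of_injective hφ).neZero'.out
  calc _ = ((twistedIncidence ψ a).map (cyclotomicReduction p k)).rank := by
        rw [twistedIncidence_map, hπψ, twistedIncidence_one]
        rfl
    _ ≤ ((twistedIncidence ψ a).map φ).rank := rank_map_le_rank_map_of_injective _ _ hφ _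
    _ ≤ S.card := by
        rw [twistedIncidence_map]
        exact rank_twistedIncidence_le_card hN hφψ ha

/-- Every Kakeya set `S ⊆ (Z/p^k Z)^n` satisfies
`|S| ≥ rank_{F_p}(W_{p^k,n})`, where `W_{p^k,n}` is the 0-1 point-hyperplane incidence
matrix with `(x,y)` entry `1` iff `⟨x,y⟩ = 0 mod p^k`. -/
theorem kakeya_card_ge_rank_incidence
    {p : ℕ} [Fact p.Prime] {k n : ℕ} (hk : 1 ≤ k) (hn : 1 ≤ n)
    (S : Finset (Fin n → ZMod (p ^ k))) (hS : IsKakeyaSet S) :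
    (Matrix.of fun x y : Fin n → ZMod (p ^ k) =>
        if ∑ i, x i * y i = 0 then (1 : ZMod p) else 0).rank ≤ S.card :=
  kakeya_card_ge_rank_incidence_general hn S hS
end
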